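/- If A has spectral radius less than 1, then the unique solution P of the discrete Lyapunov equation A P Aᵀ − P + B Bᵀ = 0 is given by the convergent series P = Σ_{k=0}^∞ Aᵏ B Bᵀ (Aᵀ)ᵏ; in particular P is symmetric positive semidefinite. -/

import Mathlib

open Matrix Filter Topology
open scoped NNReal ENNReal

def SchurStable {n : ℕ} (A : Matrix (Fin n) (Fin n) ℝ) : Prop :=
  ∀ μ ∈ spectrum ℂ (A.map (Complex.ofReal)), ‖μ‖ < 1

/-!
By Gelfand's formula, a spectral radius below `1` makes `‖Aᵏ‖` decay geometrically, so the
series `S = ∑ Aᵏ B Bᵀ (Aᵀ)ᵏ` converges, and shifting its index gives `A S Aᵀ = S - B Bᵀ`. The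
difference `D` of two solutions satisfies `D = Aᵏ D (Aᵀ)ᵏ → 0`, hence uniqueness; and `S` is
positive semidefinite as a limit of finite sums of the matrices `(Aᵏ B) (Aᵏ B)ᵀ`.
-/

section BanachAlgebra

variable {𝓐 : Type*} [NormedRing 𝓐] [NormedAlgebra ℂ 𝓐] [CompleteSpace 𝓐]

theorem spectralRadius_lt_one_of_forall_norm_lt_one {a : 𝓐}
    (h : ∀ z ∈ spectrum ℂ a, ‖z‖ < 1) : spectralRadius ℂ a < 1 := by
  cases subsingleton_or_nontrivial 𝓐
  · simp [spectrum.SpectralRadius.of_subsingleton]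
  · exact_mod_cast spectrum.spectralRadius_lt_of_forall_lt a (r := 1) fun z hz => by
      exact_mod_cast h z hz

theorem eventually_norm_pow_le_of_spectralRadius_lt {a : 𝓐} {r : ℝ≥0}
    (h : spectralRadius ℂ a < r) : ∀ᶠ k in atTop, ‖a ^ k‖ ≤ r ^ k := by
  have hgelfand := spectrum.pow_nnnorm_pow_one_div_tendsto_nhds_spectralRadius a
  filter_upwards [hgelfand.eventually_lt_const h, eventually_gt_atTop 0] with k hk hk0
  rw [one_div, ENNReal.rpow_inv_lt_iff (by positivity), ENNReal.rpow_natCast] at hk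
  exact_mod_cast hk.le

theorem summable_norm_pow_of_spectralRadius_lt_one {a : 𝓐} (h : spectralRadius ℂ a < 1) :
    Summable fun k => ‖a ^ k‖ := by
  obtain ⟨r, hρr, hr1⟩ := ENNReal.lt_iff_exists_nnreal_btwn.mp h
  have hr1 : (r : ℝ) < 1 := by exact_mod_cast hr1
  exact .of_norm_bounded_eventually_nat (summable_geometric_of_lt_one r.coe_nonneg hr1)
    (by simpa using eventually_norm_pow_le_of_spectralRadius_lt hρr)

end BanachAlgebra

theorem summable_pow_mul_mul_pow {R : Type*} [NormedRing R] [CompleteSpace R] {a b : R}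
    (ha : Summable fun k => ‖a ^ k‖) (hb : Summable fun k => ‖b ^ k‖) (x : R) :
    Summable fun k => a ^ k * x * b ^ k := by
  refine .of_norm_bounded_eventually_nat (ha.mul_right ‖x‖) ?_
  filter_upwards [hb.tendsto_atTop_zero.eventually_le_const zero_lt_one] with k hk
  calc ‖a ^ k * x * b ^ k‖ ≤ ‖a ^ k‖ * ‖x‖ * ‖b ^ k‖ := norm_mul₃_le
    _ ≤ ‖a ^ k‖ * ‖x‖ * 1 := by gcongr
    _ = ‖a ^ k‖ * ‖x‖ := mul_one _

section TopologicalRing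

variable {R : Type*} [Ring R] [TopologicalSpace R] [IsTopologicalRing R] [T2Space R]

theorem HasSum.mul_mul_sub_add_eq_zero {a b x s : R}
    (h : HasSum (fun k => a ^ k * x * b ^ k) s) : a * s * b - s + x = 0 := by
  have hshift : HasSum (fun k => a ^ (k + 1) * x * b ^ (k + 1)) (a * s * b) :=
    ((h.mul_left a).mul_right b).congr_fun fun k => by
      simp only [pow_succ' a, pow_succ b, mul_assoc]
  rw [hshift.unique ((hasSum_nat_add_iff' 1).mpr h)]
  simp

theorem eq_zero_of_mul_mul_eq_self {a b y : R} (ha : Tendsto (a ^ ·) atTop (𝓝 0))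
    (hb : Tendsto (b ^ ·) atTop (𝓝 0)) (h : a * y * b = y) : y = 0 := by
  have hiter : ∀ k, a ^ k * y * b ^ k = y := by
    intro k
    induction k with
    | zero => simp
    | succ k ih =>
      calc a ^ (k + 1) * y * b ^ (k + 1) = a ^ k * (a * y * b) * b ^ k := by
            simp only [pow_succ a, pow_succ' b, mul_assoc]
        _ = y := by rw [h, ih]
  have hlim : Tendsto (fun k => a ^ k * y * b ^ k) atTop (𝓝 0) := by
    simpa using (ha.mul_const y).mul hb
  simp only [hiter] at hlim
  exact tendsto_nhds_unique tendsto_const_nhds hlim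

theorem eq_of_mul_mul_sub_add_eq_zero {a b x p q : R} (ha : Tendsto (a ^ ·) atTop (𝓝 0))
    (hb : Tendsto (b ^ ·) atTop (𝓝 0)) (hp : a * p * b - p + x = 0)
    (hq : a * q * b - q + x = 0) : p = q := by
  refine sub_eq_zero.mp (eq_zero_of_mul_mul_eq_self ha hb ?_)
  rw [mul_sub, sub_mul, ← sub_eq_zero, ← sub_eq_zero_of_eq (hp.trans hq.symm)]
  abel

end TopologicalRing

section PosSemidef

variable {n R : Type*} [Ring R] [PartialOrder R] [StarRing R] [TopologicalSpace R]
  [IsTopologicalRing R] [ContinuousStar R] [OrderClosedTopology R]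

theorem Matrix.isClosed_setOf_posSemidef : IsClosed {M : Matrix n n R | M.PosSemidef} := by
  simp only [PosSemidef, Set.ofPred_and, Set.ofPred_forall]
  refine (isClosed_eq continuous_id.matrix_conjTranspose continuous_id).inter
    (isClosed_iInter fun x => isClosed_le continuous_const ?_)
  simp only [Finsupp.sum]
  fun_prop

theorem HasSum.posSemidef [AddLeftMono R] {ι : Type*} {f : ι → Matrix n n R} {P : Matrix n n R}
    (h : HasSum f P) (hf : ∀ i, (f i).PosSemidef) : P.PosSemidef :=
  isClosed_setOf_posSemidef.mem_of_tendsto h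
    (Eventually.of_forall fun s => posSemidef_sum s fun i _ => hf i)

end PosSemidef

section Frobenius

-- The Frobenius norm is invariant both under transposition and under complexifying the entries.
attribute [local instance] Matrix.frobeniusNormedRing Matrix.frobeniusNormedAlgebra

theorem Matrix.frobenius_norm_map_ofReal_pow {n : Type*} [Fintype n] [DecidableEq n]
    (A : Matrix n n ℝ) (k : ℕ) : ‖A.map Complex.ofReal ^ k‖ = ‖A ^ k‖ := by
  rw [← frobenius_norm_map_eq (A ^ k) _ Complex.norm_real]
  exact congrArg norm (map_pow Complex.ofRealHom.mapMatrix A k).symm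

variable {n : ℕ} {A : Matrix (Fin n) (Fin n) ℝ}

theorem SchurStable.summable_norm_pow (hA : SchurStable A) : Summable fun k => ‖A ^ k‖ := by
  simpa only [Matrix.frobenius_norm_map_ofReal_pow] using
    summable_norm_pow_of_spectralRadius_lt_one (spectralRadius_lt_one_of_forall_norm_lt_one hA)

theorem SchurStable.summable_norm_transpose_pow (hA : SchurStable A) :
    Summable fun k => ‖Aᵀ ^ k‖ := by
  simpa only [← transpose_pow, frobenius_norm_transpose] using hA.summable_norm_pow

theorem SchurStable.tendsto_pow_atTop_nhds_zero (hA : SchurStable A) :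
    Tendsto (A ^ ·) atTop (𝓝 0) :=
  tendsto_zero_iff_norm_tendsto_zero.mpr hA.summable_norm_pow.tendsto_atTop_zero

theorem SchurStable.tendsto_transpose_pow_atTop_nhds_zero (hA : SchurStable A) :
    Tendsto (Aᵀ ^ ·) atTop (𝓝 0) :=
  tendsto_zero_iff_norm_tendsto_zero.mpr hA.summable_norm_transpose_pow.tendsto_atTop_zero

theorem SchurStable.summable_pow_mul_mul_transpose_pow (hA : SchurStable A)
    (M : Matrix (Fin n) (Fin n) ℝ) : Summable fun k => A ^ k * M * Aᵀ ^ k :=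
  summable_pow_mul_mul_pow hA.summable_norm_pow hA.summable_norm_transpose_pow M

end Frobenius

theorem lyapunov_solution_series {n m : ℕ}
    (A : Matrix (Fin n) (Fin n) ℝ) (B : Matrix (Fin n) (Fin m) ℝ)
    (hA : SchurStable A) :
    (∃! P : Matrix (Fin n) (Fin n) ℝ, A * P * Aᵀ - P + B * Bᵀ = 0) ∧
    (∀ P : Matrix (Fin n) (Fin n) ℝ, A * P * Aᵀ - P + B * Bᵀ = 0 →
      HasSum (fun k : ℕ => A ^ k * (B * Bᵀ) * Aᵀ ^ k) P ∧
      P.IsSymm ∧ P.PosSemidef) := by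
  obtain ⟨S, hS⟩ := hA.summable_pow_mul_mul_transpose_pow (B * Bᵀ)
  have hsolves : A * S * Aᵀ - S + B * Bᵀ = 0 := hS.mul_mul_sub_add_eq_zero
  have huniq : ∀ P, A * P * Aᵀ - P + B * Bᵀ = 0 → P = S := fun P hP =>
    eq_of_mul_mul_sub_add_eq_zero hA.tendsto_pow_atTop_nhds_zero
      hA.tendsto_transpose_pow_atTop_nhds_zero hP hsolves
  refine ⟨⟨S, hsolves, huniq⟩, fun P hP => ?_⟩
  obtain rfl := huniq P hP
  have hpsd : P.PosSemidef := hS.posSemidef fun k => by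
    simpa only [conjTranspose_eq_transpose_of_trivial, transpose_pow] using
      (posSemidef_self_mul_conjTranspose B).mul_mul_conjTranspose_same (A ^ k)
  exact ⟨hS, isHermitian_iff_isSymm.mp hpsd.isHermitian, hpsd⟩
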